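/- Let q ≥ 2 be real, let s and t be reals with 0 ≤ s ≤ t, and let x ∈ ℝ. Then |x|^q ≤ γ_q(s,x) and γ_q(t,x) ≤ |x|^q + (q/2 − 1)t^q; consequently γ_q(t,x) − γ_q(s,x) ≤ (q/2 − 1)t^q. -/

import Mathlib

/-!
Below the threshold, `|x|^q = |x|^{q-2} x² ≤ s^{q-2} x² ≤ (q/2) s^{q-2} x²`, which gives the lower
bound. The upper bound is the tangent-line inequality for the convex function `u ↦ u^{q/2}` at
`u = t²`, evaluated at `u = x²`; it follows from weighted AM-GM.
-/

/-- The per-coordinate smoothed power function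
`γ_q(t,x) = (q/2)t^{q−2}x²` if `|x| ≤ t`, and `|x|^q + (q/2 − 1)t^q` otherwise. -/
noncomputable def gam (q t x : ℝ) : ℝ :=
  if |x| ≤ t then q / 2 * t ^ (q - 2) * x ^ 2 else |x| ^ q + (q / 2 - 1) * t ^ q

namespace Real

/-- Tangent-line inequality for `u ↦ u ^ p` at `v`. -/
theorem mul_rpow_sub_one_mul_le {p u v : ℝ} (hp : 1 ≤ p) (hu : 0 ≤ u) (hv : 0 ≤ v) :
    p * v ^ (p - 1) * u ≤ u ^ p + (p - 1) * v ^ p := by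
  have hp0 : p ≠ 0 := by positivity
  have amgm := geom_mean_le_arith_mean2_weighted (inv_nonneg.2 (zero_le_one.trans hp))
    (sub_nonneg.2 (inv_le_one_of_one_le₀ hp)) (rpow_nonneg hu p) (rpow_nonneg hv p)
    (add_sub_cancel _ _)
  rw [rpow_rpow_inv hu hp0, ← rpow_mul hv, mul_sub, mul_one, mul_inv_cancel₀ hp0] at amgm
  calc p * v ^ (p - 1) * u = p * (u * v ^ (p - 1)) := by ring
    _ ≤ p * (p⁻¹ * u ^ p + (1 - p⁻¹) * v ^ p) := by gcongr
    _ = u ^ p + (p - 1) * v ^ p := by field_simp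

end Real

theorem rpow_abs_le_mul_rpow_mul_sq {q s x : ℝ} (hq : 2 ≤ q) (hxs : |x| ≤ s) :
    |x| ^ q ≤ q / 2 * s ^ (q - 2) * x ^ 2 :=
  calc |x| ^ q = |x| ^ (q - 2) * x ^ 2 := by
        rw [← sq_abs x, ← Real.rpow_two, ← Real.rpow_add' (abs_nonneg x) (by linarith),
          sub_add_cancel]
    _ ≤ s ^ (q - 2) * x ^ 2 := by gcongr
    _ ≤ q / 2 * s ^ (q - 2) * x ^ 2 := by
        rw [mul_assoc]
        have : 0 ≤ s := (abs_nonneg x).trans hxs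
        exact le_mul_of_one_le_left (by positivity) (by linarith)

theorem mul_rpow_mul_sq_le {q t : ℝ} (hq : 2 ≤ q) (ht : 0 ≤ t) (x : ℝ) :
    q / 2 * t ^ (q - 2) * x ^ 2 ≤ |x| ^ q + (q / 2 - 1) * t ^ q := by
  have sq_rpow_half (y r : ℝ) : (y ^ 2) ^ (r / 2) = |y| ^ r := by
    rw [← sq_abs, ← Real.rpow_two, ← Real.rpow_mul (abs_nonneg y), mul_div_cancel₀ r two_ne_zero]
  have tangent := Real.mul_rpow_sub_one_mul_le (p := q / 2) (by linarith) (sq_nonneg x)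
    (sq_nonneg t)
  rwa [show q / 2 - 1 = (q - 2) / 2 by ring, sq_rpow_half, sq_rpow_half, sq_rpow_half,
    abs_of_nonneg ht, ← show q / 2 - 1 = (q - 2) / 2 by ring] at tangent

theorem rpow_abs_le_gam {q s : ℝ} (hq : 2 ≤ q) (hs : 0 ≤ s) (x : ℝ) : |x| ^ q ≤ gam q s x := by
  unfold gam
  split_ifs with hxs
  · exact rpow_abs_le_mul_rpow_mul_sq hq hxs
  · have : 0 ≤ (q / 2 - 1) * s ^ q := mul_nonneg (by linarith) (Real.rpow_nonneg hs q)
    linarith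

theorem gam_le {q t : ℝ} (hq : 2 ≤ q) (ht : 0 ≤ t) (x : ℝ) :
    gam q t x ≤ |x| ^ q + (q / 2 - 1) * t ^ q := by
  unfold gam
  split_ifs
  · exact mul_rpow_mul_sq_le hq ht x
  · rfl

/-- per-coordinate estimate in Lemma 5.2, Scaling. -/
theorem stmt_14 {q : ℝ} (hq : 2 ≤ q) {s t : ℝ} (hs : 0 ≤ s) (hst : s ≤ t) (x : ℝ) :
    |x| ^ q ≤ gam q s x ∧ gam q t x ≤ |x| ^ q + (q / 2 - 1) * t ^ q ∧
      gam q t x - gam q s x ≤ (q / 2 - 1) * t ^ q := by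
  have lower := rpow_abs_le_gam hq hs x
  have upper := gam_le hq (hs.trans hst) x
  exact ⟨lower, upper, by linarith⟩
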